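/- Let g be the 6-dimensional nilpotent Lie algebra h₄ with abelian complex structure J₀ given by dη¹ = dη² = 0, dη³ = (i/2) η^{1 1̄} + (1/2) η^{1 2̄} + (1/2) η^{2 1̄}. For each a ∈ ℂ with 0 < |a| < 1, define the deformed complex structure J_a by declaring μ¹ = η¹ + a η̄¹ − i a η̄², μ² = η², μ³ = η³ to be of type (1,0). Then J_a admits a (1,0)-basis ω¹,ω²,ω³ with structure equations dω¹ = dω² = 0, dω³ = ω¹² + ω^{1 1̄} + ω^{1 2̄} + D_a ω^{2 2̄}, where D_a = (|a|² − 1)/(4|a|²). -/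

import Mathlib

/-!
With `r = |a|`, `μ̄¹ = η̄¹ + ā η¹ + i ā η²` and `μ̄² = η̄²`, a direct expansion gives
`2 (1 - r²) dη³ = 2 ā μ¹² + i μ^{1 1̄} + μ^{1 2̄} + μ^{2 1̄} - i r² μ^{2 2̄}`.
Put `ω¹ = π w¹`, `ω² = π w²` with `w¹ = (1 - r²)(μ¹ + r μ²)`, `w² = 2r ((r - i) μ¹ + r (r + i) μ²)`.
The phase `π` scales the (2,0)-part `ω¹²` of the right-hand side by `π²` and its (1,1)-part by
`|π|²`. For these `w`, the (1,1)-part is `2r (1 - r²)` times that of the identity above and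
`w¹ ∧ w² = 4 i r² (1 - r²) μ¹²`, so choosing `π² = -i ā (1 - r²)`, hence `|π|² = r (1 - r²)`,
turns the right-hand side into `d (4 r² (1 - r²)³ η³)`.
-/

noncomputable section

open Submodule LinearMap

abbrev E : Type := ExteriorAlgebra ℂ (Fin 6 → ℂ)

def η (i : Fin 3) : E := ExteriorAlgebra.ι ℂ (Pi.single (⟨i.1, by omega⟩ : Fin 6) (1 : ℂ))
def ηb (i : Fin 3) : E := ExteriorAlgebra.ι ℂ (Pi.single (⟨i.1 + 3, by omega⟩ : Fin 6) (1 : ℂ))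

def IsAntider (d : E →ₗ[ℂ] E) : Prop :=
  d 1 = 0 ∧ ∀ (v : Fin 6 → ℂ) (y : E),
    d (ExteriorAlgebra.ι ℂ v * y) =
      d (ExteriorAlgebra.ι ℂ v) * y - ExteriorAlgebra.ι ℂ v * d y

open ComplexConjugate Complex ExteriorAlgebra

theorem ExteriorAlgebra.ι_mul_ι_swap {R M : Type*} [CommRing R] [AddCommGroup M] [Module R M]
    (u v : M) : ι R v * ι R u = -(ι R u * ι R v) :=
  eq_neg_of_add_eq_zero_left (ι_add_mul_swap v u)

theorem ExteriorAlgebra.smul_add_smul_mul_smul_add_smul {R M : Type*} [CommRing R]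
    [AddCommGroup M] [Module R M] {u v : ExteriorAlgebra R M}
    (hu : u ∈ range (ι R)) (hv : v ∈ range (ι R)) (x y x' y' : R) :
    (x • u + y • v) * (x' • u + y' • v) = (x * y' - y * x') • (u * v) := by
  obtain ⟨u, rfl⟩ := hu
  obtain ⟨v, rfl⟩ := hv
  simp only [add_mul, mul_add, smul_mul_smul_comm, ι_sq_zero, ι_mul_ι_swap u v]
  module

theorem Submodule.span_triple_eq_of_det_ne_zero {K V : Type*} [Field K] [AddCommGroup V]
    [Module K V] {u v w : V} {x₁ y₁ x₂ y₂ z : K} (hdet : x₁ * y₂ - y₁ * x₂ ≠ 0) (hz : z ≠ 0) :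
    span K {x₁ • u + y₁ • v, x₂ • u + y₂ • v, z • w} = span K {u, v, w} := by
  apply le_antisymm <;>
    simp only [span_le, Set.insert_subset_iff, Set.singleton_subset_iff, SetLike.mem_coe,
      mem_span_triple]
  · exact ⟨⟨x₁, y₁, 0, by module⟩, ⟨x₂, y₂, 0, by module⟩, ⟨0, 0, z, by module⟩⟩
  · set δ := x₁ * y₂ - y₁ * x₂ with hδ
    refine ⟨⟨y₂ / δ, -y₁ / δ, 0, ?_⟩, ⟨-x₂ / δ, x₁ / δ, 0, ?_⟩, ⟨0, 0, z⁻¹, ?_⟩⟩ <;>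
      match_scalars <;> field_simp <;> linear_combination hδ

theorem Complex.mul_conj_eq_norm_of_sq_eq {π z : ℂ} (h : π ^ 2 = z) : π * conj π = ‖z‖ := by
  rw [mul_conj', ← h, norm_pow]
  push_cast
  rfl

theorem Complex.exists_sq_eq_neg_I_mul_conj_mul {a : ℂ} (ha0 : 0 < ‖a‖) (ha1 : ‖a‖ < 1) :
    ∃ π : ℂ, π ≠ 0 ∧ π ^ 2 = -I * conj a * (1 - (‖a‖ : ℂ) ^ 2) ∧
      π * conj π = ‖a‖ * (1 - (‖a‖ : ℂ) ^ 2) := by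
  have hK : (1 - (‖a‖ : ℂ) ^ 2) = ((1 - ‖a‖ ^ 2 : ℝ) : ℂ) := by push_cast; rfl
  have hK0 : 0 < 1 - ‖a‖ ^ 2 := by nlinarith
  obtain ⟨π, hπ⟩ := IsAlgClosed.exists_pow_nat_eq (-I * conj a * (1 - (‖a‖ : ℂ) ^ 2)) two_pos
  have hK0' : 1 - (‖a‖ : ℂ) ^ 2 ≠ 0 := by rw [hK]; exact_mod_cast hK0.ne'
  refine ⟨π, ?_, hπ, ?_⟩
  · rintro rfl
    simp [hK0', norm_pos_iff.mp ha0] at hπ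
  · rw [mul_conj_eq_norm_of_sq_eq hπ, norm_mul, norm_mul, norm_neg, norm_I, one_mul, norm_conj, hK,
      Complex.norm_of_nonneg hK0.le]
    push_cast
    rfl

section NormalBasis

variable {V : Type*} [AddCommGroup V] [Module ℂ V]

def normalBasis₁ (r : ℝ) (m₁ m₂ : V) : V := (1 - (r : ℂ) ^ 2) • m₁ + (r * (1 - (r : ℂ) ^ 2)) • m₂

def normalBasis₂ (r : ℝ) (m₁ m₂ : V) : V := (2 * r * (r - I)) • m₁ + (2 * r ^ 2 * (r + I)) • m₂

theorem span_normalBasis {r : ℝ} {π c : ℂ}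
    (hr : r ≠ 0) (hr1 : 1 - (r : ℂ) ^ 2 ≠ 0) (hπ : π ≠ 0) (hc : c ≠ 0) (u v w : V) :
    span ℂ {π • normalBasis₁ r u v, π • normalBasis₂ r u v, c • w} = span ℂ {u, v, w} := by
  simp only [normalBasis₁, normalBasis₂, smul_add, smul_smul]
  refine span_triple_eq_of_det_ne_zero ?_ hc
  rw [show π * (1 - (r : ℂ) ^ 2) * (π * (2 * r ^ 2 * (r + I))) -
      π * (r * (1 - (r : ℂ) ^ 2)) * (π * (2 * r * (r - I))) =
      4 * I * r ^ 2 * (1 - (r : ℂ) ^ 2) * π ^ 2 by ring]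
  simp [hr, hr1, hπ]

end NormalBasis

section Conjugation

variable {A : Type*} [Ring A] [Algebra ℂ A] (σ : A →ₛₗ[starRingEnd ℂ] A)

-- The right-hand side of the Family I structure equation with `ρ = λ = 1`.
def familyIForm (D : ℂ) (ω₁ ω₂ : A) : A := ω₁ * ω₂ + ω₁ * σ ω₁ + ω₁ * σ ω₂ + D • (ω₂ * σ ω₂)

theorem smul_add_smul_mul_conj (m₁ m₂ : A) (x y x' y' : ℂ) :
    (x • m₁ + y • m₂) * σ (x' • m₁ + y' • m₂) =
      (x * conj x') • (m₁ * σ m₁) + (x * conj y') • (m₁ * σ m₂) +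
        (y * conj x') • (m₂ * σ m₁) + (y * conj y') • (m₂ * σ m₂) := by
  simp only [map_add, map_smulₛₗ, add_mul, mul_add, smul_mul_smul_comm]
  abel

theorem familyIForm_smul (π D : ℂ) (w₁ w₂ : A) :
    familyIForm σ D (π • w₁) (π • w₂) =
      π ^ 2 • (w₁ * w₂) + (π * conj π) • (w₁ * σ w₁ + w₁ * σ w₂ + D • (w₂ * σ w₂)) := by
  simp only [familyIForm, map_smulₛₗ, smul_mul_smul_comm]
  module

theorem normalBasis_hermitian_part (r : ℝ) (D : ℂ) (hD : 4 * r ^ 2 * D = r ^ 2 - 1) (m₁ m₂ : A) :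
    normalBasis₁ r m₁ m₂ * σ (normalBasis₁ r m₁ m₂) +
        normalBasis₁ r m₁ m₂ * σ (normalBasis₂ r m₁ m₂) +
        D • (normalBasis₂ r m₁ m₂ * σ (normalBasis₂ r m₁ m₂)) =
      (2 * r * (1 - (r : ℂ) ^ 2)) •
        (I • (m₁ * σ m₁) + m₁ * σ m₂ + m₂ * σ m₁ - (I * r ^ 2) • (m₂ * σ m₂)) := by
  simp only [normalBasis₁, normalBasis₂, smul_add_smul_mul_conj]
  simp only [map_mul, map_sub, map_add, map_pow, map_one, map_ofNat, conj_ofReal, conj_I]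
  match_scalars
  · linear_combination (r ^ 2 + 1) * hD - 4 * r ^ 2 * D * I_sq
  · linear_combination r * (r - I) ^ 2 * hD - r * (1 - r ^ 2) * I_sq
  · linear_combination r * (r + I) ^ 2 * hD - r * (1 - r ^ 2) * I_sq
  · linear_combination r ^ 2 * (r ^ 2 - I ^ 2) * hD + r ^ 2 * (1 - r ^ 2) * I_sq

end Conjugation

section OneForms

variable {M : Type*} [AddCommGroup M] [Module ℂ M]
  (σ : ExteriorAlgebra ℂ M →ₛₗ[starRingEnd ℂ] ExteriorAlgebra ℂ M)

theorem normalBasis₁_mul_normalBasis₂ {m₁ m₂ : ExteriorAlgebra ℂ M} (hm₁ : m₁ ∈ range (ι ℂ))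
    (hm₂ : m₂ ∈ range (ι ℂ)) (r : ℝ) :
    normalBasis₁ r m₁ m₂ * normalBasis₂ r m₁ m₂ =
      (4 * I * r ^ 2 * (1 - (r : ℂ) ^ 2)) • (m₁ * m₂) := by
  rw [normalBasis₁, normalBasis₂, smul_add_smul_mul_smul_add_smul hm₁ hm₂]
  congr 1
  ring

theorem familyIForm_normalBasis {m₁ m₂ : ExteriorAlgebra ℂ M} (hm₁ : m₁ ∈ range (ι ℂ))
    (hm₂ : m₂ ∈ range (ι ℂ)) (a π : ℂ) (r : ℝ) (hπ : π ^ 2 = -I * conj a * (1 - (r : ℂ) ^ 2))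
    (hππ : π * conj π = r * (1 - (r : ℂ) ^ 2)) (D : ℂ) (hD : 4 * r ^ 2 * D = r ^ 2 - 1) :
    familyIForm σ D (π • normalBasis₁ r m₁ m₂) (π • normalBasis₂ r m₁ m₂) =
      (2 * r ^ 2 * (1 - (r : ℂ) ^ 2) ^ 2) • ((2 * conj a) • (m₁ * m₂) + I • (m₁ * σ m₁) +
        m₁ * σ m₂ + m₂ * σ m₁ - (I * r ^ 2) • (m₂ * σ m₂)) := by
  rw [familyIForm_smul, normalBasis₁_mul_normalBasis₂ hm₁ hm₂, normalBasis_hermitian_part σ r D hD,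
    hπ, hππ]
  match_scalars
  · linear_combination -4 * conj a * r ^ 2 * (1 - (r : ℂ) ^ 2) ^ 2 * I_sq
  all_goals ring

end OneForms

theorem η_mem_range (i : Fin 3) : η i ∈ range (ι ℂ) := mem_range_self _ _
theorem ηb_mem_range (i : Fin 3) : ηb i ∈ range (ι ℂ) := mem_range_self _ _

@[simp] theorem η_mul_self (i : Fin 3) : η i * η i = 0 := ι_sq_zero _
@[simp] theorem ηb_mul_self (i : Fin 3) : ηb i * ηb i = 0 := ι_sq_zero _
@[simp] theorem η_one_mul_η_zero : η 1 * η 0 = -(η 0 * η 1) := ι_mul_ι_swap _ _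
@[simp] theorem ηb_one_mul_ηb_zero : ηb 1 * ηb 0 = -(ηb 0 * ηb 1) := ι_mul_ι_swap _ _
@[simp] theorem ηb_mul_η (i j : Fin 3) : ηb i * η j = -(η j * ηb i) := ι_mul_ι_swap _ _

def μ (a : ℂ) : E := η 0 + a • ηb 0 - (I * a) • ηb 1

def μbar (a : ℂ) : E := ηb 0 + conj a • η 0 + (I * conj a) • η 1

theorem μ_mem_range (a : ℂ) : μ a ∈ range (ι ℂ) :=
  sub_mem (add_mem (η_mem_range 0) (smul_mem _ _ (ηb_mem_range 0))) (smul_mem _ _ (ηb_mem_range 1))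

theorem map_μ_eq_μbar {σ : E →ₛₗ[starRingEnd ℂ] E} (hση : ∀ j, σ (η j) = ηb j)
    (hσηb : ∀ j, σ (ηb j) = η j) (a : ℂ) : σ (μ a) = μbar a := by
  simp only [μ, μbar, map_sub, map_add, map_smulₛₗ, hση, hσηb, map_mul, conj_I]
  module

theorem smul_dη₃_eq_μ_basis (a : ℂ) :
    (2 * (1 - a * conj a)) • ((I / 2) • (η 0 * ηb 0) + (1 / 2 : ℂ) • (η 0 * ηb 1)
      + (1 / 2 : ℂ) • (η 1 * ηb 0)) =
    (2 * conj a) • (μ a * η 1) + I • (μ a * μbar a) + μ a * ηb 1 + η 1 * μbar a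
      - (I * (a * conj a)) • (η 1 * ηb 1) := by
  simp only [μ, μbar, mul_add, add_mul, mul_sub, sub_mul, smul_mul_assoc, mul_smul_comm,
    η_mul_self, ηb_mul_self, η_one_mul_η_zero, ηb_one_mul_ηb_zero, ηb_mul_η]
  match_scalars <;> grind [I_sq]

theorem deformation_of_h4_abelian_structure_normal_form_general
    (a : ℂ) (ha0 : 0 < ‖a‖) (ha1 : ‖a‖ < 1)
    (d : E →ₗ[ℂ] E)
    (h1 : d (η 0) = 0) (h2 : d (η 1) = 0)
    (h3 : d (η 2) = (Complex.I / 2) • (η 0 * ηb 0) + (1 / 2 : ℂ) • (η 0 * ηb 1)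
      + (1 / 2 : ℂ) • (η 1 * ηb 0))
    (h1c : d (ηb 0) = 0) (h2c : d (ηb 1) = 0)
    (σ : E →ₛₗ[starRingEnd ℂ] E)
    (hση : ∀ j : Fin 3, σ (η j) = ηb j) (hσηb : ∀ j : Fin 3, σ (ηb j) = η j) :
    ∃ ω1 ω2 ω3 : E,
      span ℂ {ω1, ω2, ω3} =
        span ℂ {η 0 + a • ηb 0 - (Complex.I * a) • ηb 1, η 1, η 2} ∧
      d ω1 = 0 ∧ d ω2 = 0 ∧
      d ω3 = ω1 * ω2 + ω1 * σ ω1 + ω1 * σ ω2 +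
        (((‖a‖ ^ 2 - 1) / (4 * ‖a‖ ^ 2) : ℝ) : ℂ) • (ω2 * σ ω2) := by
  obtain ⟨π, hπ0, hπ, hππ⟩ := exists_sq_eq_neg_I_mul_conj_mul ha0 ha1
  have hr : (‖a‖ : ℂ) ≠ 0 := ofReal_ne_zero.mpr ha0.ne'
  have hr1 : 1 - (‖a‖ : ℂ) ^ 2 ≠ 0 := by
    exact_mod_cast (by nlinarith : (1 : ℝ) - ‖a‖ ^ 2 ≠ 0)
  have hD : 4 * (‖a‖ : ℂ) ^ 2 * (((‖a‖ ^ 2 - 1) / (4 * ‖a‖ ^ 2) : ℝ) : ℂ) = ‖a‖ ^ 2 - 1 := by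
    push_cast
    field_simp
  have hdμ : d (μ a) = 0 := by simp [μ, h1, h1c, h2c]
  refine ⟨π • normalBasis₁ ‖a‖ (μ a) (η 1), π • normalBasis₂ ‖a‖ (μ a) (η 1),
    (4 * ‖a‖ ^ 2 * (1 - (‖a‖ : ℂ) ^ 2) ^ 3) • η 2, ?_, ?_, ?_, ?_⟩
  · exact span_normalBasis ha0.ne' hr1 hπ0 (by simp [hr, hr1]) _ _ _
  · simp [normalBasis₁, hdμ, h2]
  · simp [normalBasis₂, hdμ, h2]
  rw [map_smul, h3, show 4 * (‖a‖ : ℂ) ^ 2 * (1 - (‖a‖ : ℂ) ^ 2) ^ 3 =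
      2 * ‖a‖ ^ 2 * (1 - (‖a‖ : ℂ) ^ 2) ^ 2 * (2 * (1 - a * conj a)) by rw [mul_conj']; ring,
    ← smul_smul, smul_dη₃_eq_μ_basis, mul_conj', ← map_μ_eq_μbar hση hσηb, ← hση 1]
  exact (familyIForm_normalBasis σ (μ_mem_range a) (η_mem_range 1) a π ‖a‖ hπ hππ _ hD).symm

theorem deformation_of_h4_abelian_structure_normal_form
    (a : ℂ) (ha0 : 0 < ‖a‖) (ha1 : ‖a‖ < 1)
    (d : E →ₗ[ℂ] E) (hd : IsAntider d)
    (h1 : d (η 0) = 0) (h2 : d (η 1) = 0)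
    (h3 : d (η 2) = (Complex.I / 2) • (η 0 * ηb 0) + (1 / 2 : ℂ) • (η 0 * ηb 1)
      + (1 / 2 : ℂ) • (η 1 * ηb 0))
    (h1c : d (ηb 0) = 0) (h2c : d (ηb 1) = 0)
    (h3c : d (ηb 2) = (-(Complex.I) / 2) • (ηb 0 * η 0) + (1 / 2 : ℂ) • (ηb 0 * η 1)
      + (1 / 2 : ℂ) • (ηb 1 * η 0))
    (σ : E →ₛₗ[starRingEnd ℂ] E)
    (hση : ∀ j : Fin 3, σ (η j) = ηb j) (hσηb : ∀ j : Fin 3, σ (ηb j) = η j)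
    (hσmul : ∀ x y : E, σ (x * y) = σ x * σ y)
    (hσd : ∀ x : E, σ (d x) = d (σ x)) :
    ∃ ω1 ω2 ω3 : E,
      span ℂ {ω1, ω2, ω3} =
        span ℂ {η 0 + a • ηb 0 - (Complex.I * a) • ηb 1, η 1, η 2} ∧
      d ω1 = 0 ∧ d ω2 = 0 ∧
      d ω3 = ω1 * ω2 + ω1 * σ ω1 + ω1 * σ ω2 +
        (((‖a‖ ^ 2 - 1) / (4 * ‖a‖ ^ 2) : ℝ) : ℂ) • (ω2 * σ ω2) :=
  deformation_of_h4_abelian_structure_normal_form_general a ha0 ha1 d h1 h2 h3 h1c h2c σ hση hσηb
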